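/- Let (M,d,0) be a separable ultrametric space and let N ⊆ M be a finite subset with 0 ∈ N. Then there exists a linear projection P on F(M) with ‖P‖ ≤ 1 whose range is the linear span of {δ_M(x) : x ∈ N}; in particular, F(N) is 1-complemented in F(M). -/

import Mathlib

open scoped NNReal ENNReal
open Metric Filter

noncomputable section

/-- The space `Lip₀(M)` of real-valued Lipschitz functions on `M` vanishing at the
distinguished point `base`, as a submodule of `M → ℝ`. -/
def LipZero (M : Type*) [MetricSpace M] (base : M) : Submodule ℝ (M → ℝ) where
  carrier := {f | MemHolder 1 f ∧ f base = 0}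
  add_mem' := fun hf hg => ⟨hf.1.add hg.1, by simp [hf.2, hg.2]⟩
  zero_mem' := ⟨memHolder_zero, rfl⟩
  smul_mem' := fun c f hf => ⟨hf.1.smul, by simp [hf.2]⟩

variable {M : Type*} [MetricSpace M] {base : M}

lemma LipZero.memHolder (f : LipZero M base) : MemHolder 1 (f : M → ℝ) := f.2.1

lemma LipZero.base_eq_zero (f : LipZero M base) : (f : M → ℝ) base = 0 := f.2.2

lemma LipZero.lipschitzWith (f : LipZero M base) :
    LipschitzWith (nnHolderNorm 1 (f : M → ℝ)) (f : M → ℝ) :=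
  holderWith_one.mp f.2.1.holderWith

/-- The norm on `Lip₀(M)`: the optimal Lipschitz constant. -/
noncomputable instance LipZero.normedAddCommGroup : NormedAddCommGroup (LipZero M base) :=
  AddGroupNorm.toNormedAddCommGroup
    { toFun := fun f => nnHolderNorm 1 (f : M → ℝ)
      map_zero' := by simp
      add_le' := fun f g => by
        have := (LipZero.memHolder f).nnHolderNorm_add_le (LipZero.memHolder g)
        exact_mod_cast this
      neg' := fun f => by
        show (nnHolderNorm 1 ((-f : LipZero M base) : M → ℝ) : ℝ) = _
        have h : ((-f : LipZero M base) : M → ℝ) = (-1 : ℝ) • (f : M → ℝ) := by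
          simp
        rw [h, (LipZero.memHolder f).nnHolderNorm_smul ((-1 : ℝ))]
        simp
      eq_zero_of_map_eq_zero' := fun f hf => by
        have hf' : (nnHolderNorm 1 (f : M → ℝ) : ℝ) = 0 := hf
        have h0 : nnHolderNorm 1 (f : M → ℝ) = 0 := by exact_mod_cast hf'
        have hconst := ((LipZero.memHolder f).nnHolderNorm_eq_zero).mp h0
        have : ∀ x, (f : M → ℝ) x = 0 := fun x =>
          (hconst x base).trans (LipZero.base_eq_zero f)
        exact Subtype.ext (funext this) }

lemma LipZero.norm_def (f : LipZero M base) :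
    ‖f‖ = (nnHolderNorm 1 (f : M → ℝ) : ℝ) := rfl

noncomputable instance LipZero.normedSpace : NormedSpace ℝ (LipZero M base) where
  norm_smul_le c f := by
    have : ((c • f : LipZero M base) : M → ℝ) = c • (f : M → ℝ) := rfl
    rw [LipZero.norm_def, LipZero.norm_def, this, (LipZero.memHolder f).nnHolderNorm_smul c]
    push_cast
    simp [norm_smul]

lemma LipZero.dist_le (f : LipZero M base) (x y : M) :
    dist ((f : M → ℝ) x) ((f : M → ℝ) y) ≤ ‖f‖ * dist x y :=
  (LipZero.lipschitzWith f).dist_le_mul x y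

/-- The topological dual `E →L[𝕜] 𝕜`, with the norm topology on `E` (old Mathlib's
`NormedSpace.Dual`). -/
def NormedSpace.Dual (𝕜 : Type*) [NontriviallyNormedField 𝕜] (E : Type*)
    [SeminormedAddCommGroup E] [NormedSpace 𝕜 E] : Type _ := E →L[𝕜] 𝕜

instance NormedSpace.Dual.instSeminormedAddCommGroup (𝕜 : Type*) [NontriviallyNormedField 𝕜]
    (E : Type*) [SeminormedAddCommGroup E] [NormedSpace 𝕜 E] :
    SeminormedAddCommGroup (NormedSpace.Dual 𝕜 E) :=
  inferInstanceAs (SeminormedAddCommGroup (E →L[𝕜] 𝕜))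

instance NormedSpace.Dual.instNormedSpace (𝕜 : Type*) [NontriviallyNormedField 𝕜]
    (E : Type*) [SeminormedAddCommGroup E] [NormedSpace 𝕜 E] :
    NormedSpace 𝕜 (NormedSpace.Dual 𝕜 E) :=
  inferInstanceAs (NormedSpace 𝕜 (E →L[𝕜] 𝕜))

instance NormedSpace.Dual.instCompleteSpace (𝕜 : Type*) [NontriviallyNormedField 𝕜]
    [CompleteSpace 𝕜] (E : Type*) [SeminormedAddCommGroup E] [NormedSpace 𝕜 E] :
    CompleteSpace (NormedSpace.Dual 𝕜 E) :=
  inferInstanceAs (CompleteSpace (E →L[𝕜] 𝕜))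

variable (M base) in
/-- The Dirac map `δ : M → Lip₀(M)*`. -/
noncomputable def freeDelta (x : M) : NormedSpace.Dual ℝ (LipZero M base) :=
  LinearMap.mkContinuous
    { toFun := fun f => (f : M → ℝ) x
      map_add' := fun f g => rfl
      map_smul' := fun c f => rfl }
    (dist x base)
    (fun f => by
      have h := LipZero.dist_le f x base
      rw [LipZero.base_eq_zero f, dist_zero_right] at h
      simpa [mul_comm] using h)

variable (M base) in
/-- The Lipschitz-free space `F(M)`: the closed linear span of the Dirac measures
inside `Lip₀(M)*`. -/
noncomputable def FreeSpace : Submodule ℝ (NormedSpace.Dual ℝ (LipZero M base)) :=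
  (Submodule.span ℝ (Set.range (freeDelta M base))).topologicalClosure

variable (M base) in
/-- The Dirac map, viewed as a map into the free space `F(M)`. -/
noncomputable def freeDeltaF (x : M) : FreeSpace M base :=
  ⟨freeDelta M base x,
    Submodule.le_topologicalClosure _ (Submodule.subset_span ⟨x, rfl⟩)⟩

instance : CompleteSpace (FreeSpace M base) :=
  (Submodule.isClosed_topologicalClosure _).completeSpace_coe

/-! In an ultrametric space, the nearest-point retraction `r` onto a finite set `N`, with ties
broken by a fixed well-order, is `1`-Lipschitz: points closer to each other than to `N` have the
same nearest points. Its linearization on `F(M)`, the transpose of `f ↦ f ∘ r`, is a projection of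
norm at most `1` onto the span of `δ(N)`, and by McShane's extension theorem the inclusion
`N → M` linearizes to an isometry of `F(N)` onto that span. -/

section NearestPoint

variable {X : Type*} [MetricSpace X]

def nearestPoints (s : Set X) (x : X) : Set X := {a | a ∈ s ∧ ∀ b ∈ s, dist x a ≤ dist x b}

lemma Set.Finite.nearestPoints_nonempty {s : Set X} (hs : s.Finite) (hne : s.Nonempty) (x : X) :
    (nearestPoints s x).Nonempty :=
  s.exists_min_image (dist x) hs hne

/-- Ties are broken by a fixed well-order of `X`, so that points with the same nearest points
have the same image. -/
def nearestPointRetraction (s : Set X) (hs : ∀ x, (nearestPoints s x).Nonempty)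
    (x : X) : X :=
  WellOrderingRel.isWellOrder.wf.min (nearestPoints s x) (hs x)

variable {s : Set X} {hs : ∀ x, (nearestPoints s x).Nonempty}

lemma nearestPointRetraction_mem_nearestPoints (x : X) :
    nearestPointRetraction s hs x ∈ nearestPoints s x :=
  WellFounded.min_mem _ _ _

lemma nearestPointRetraction_mem (x : X) : nearestPointRetraction s hs x ∈ s :=
  (nearestPointRetraction_mem_nearestPoints x).1

lemma dist_nearestPointRetraction_le (x : X) {b : X} (hb : b ∈ s) :
    dist x (nearestPointRetraction s hs x) ≤ dist x b :=
  (nearestPointRetraction_mem_nearestPoints x).2 b hb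

lemma nearestPointRetraction_of_mem {x : X} (hx : x ∈ s) : nearestPointRetraction s hs x = x :=
  (dist_le_zero.mp (by simpa using dist_nearestPointRetraction_le (hs := hs) x hx)).symm

lemma range_nearestPointRetraction : Set.range (nearestPointRetraction s hs) = s :=
  (Set.range_subset_iff.mpr nearestPointRetraction_mem).antisymm
    fun x hx => ⟨x, nearestPointRetraction_of_mem hx⟩

variable [IsUltrametricDist X]

lemma IsUltrametricDist.dist_eq_of_dist_lt {x y z : X} (h : dist x y < dist x z) :
    dist y z = dist x z := by
  have := IsUltrametricDist.dist_eq_max_of_dist_ne_dist y x z (by rw [dist_comm]; exact h.ne)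
  rwa [dist_comm y x, max_eq_right h.le] at this

lemma nearestPoints_eq_of_forall_dist_lt {x y : X} (h : ∀ b ∈ s, dist x y < dist x b) :
    nearestPoints s y = nearestPoints s x := by
  have hdist : ∀ b ∈ s, dist y b = dist x b :=
    fun b hb => IsUltrametricDist.dist_eq_of_dist_lt (h b hb)
  ext a
  exact and_congr_right fun ha => forall₂_congr fun b hb => by rw [hdist a ha, hdist b hb]

/-- If `y` is closer to `x` than `s` is, both have the same nearest points; otherwise
`d(x, r x) ≤ d(x, y)`, and the ultrametric inequality bounds `d(r x, r y)` by `d(x, y)`. -/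
lemma lipschitzWith_one_nearestPointRetraction :
    LipschitzWith 1 (nearestPointRetraction s hs) := by
  refine LipschitzWith.of_dist_le_mul fun x y => ?_
  set r := nearestPointRetraction s hs
  rw [NNReal.coe_one, one_mul]
  rcases lt_or_ge (dist x y) (dist x (r x)) with hxy | hxy
  · have h : ∀ b ∈ s, dist x y < dist x b :=
      fun b hb => hxy.trans_le (dist_nearestPointRetraction_le x hb)
    have hr : r y = r x := by
      simp only [r, nearestPointRetraction, nearestPoints_eq_of_forall_dist_lt h]
    rw [hr, dist_self]
    exact dist_nonneg
  · have hy : dist y (r y) ≤ dist x y :=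
      calc dist y (r y) ≤ dist y (r x) :=
            dist_nearestPointRetraction_le y (nearestPointRetraction_mem x)
        _ ≤ max (dist y x) (dist x (r x)) := dist_triangle_max _ _ _
        _ ≤ dist x y := max_le (dist_comm y x).le hxy
    calc dist (r x) (r y) ≤ max (dist (r x) x) (dist x (r y)) := dist_triangle_max _ _ _
      _ ≤ max (dist (r x) x) (max (dist x y) (dist y (r y))) := by
          gcongr; exact dist_triangle_max _ _ _
      _ ≤ dist x y := max_le (by rwa [dist_comm]) (max_le le_rfl hy)

end NearestPoint

instance NormedSpace.Dual.instFunLike (𝕜 : Type*) [NontriviallyNormedField 𝕜] (E : Type*)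
    [SeminormedAddCommGroup E] [NormedSpace 𝕜 E] : FunLike (NormedSpace.Dual 𝕜 E) E 𝕜 :=
  inferInstanceAs (FunLike (E →L[𝕜] 𝕜) E 𝕜)

instance NormedSpace.Dual.instNormedAddCommGroup (𝕜 : Type*) [NontriviallyNormedField 𝕜]
    (E : Type*) [NormedAddCommGroup E] [NormedSpace 𝕜 E] :
    NormedAddCommGroup (NormedSpace.Dual 𝕜 E) :=
  inferInstanceAs (NormedAddCommGroup (E →L[𝕜] 𝕜))

namespace NormedSpace.Dual

variable {E F : Type*} [SeminormedAddCommGroup E] [NormedSpace ℝ E]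
  [SeminormedAddCommGroup F] [NormedSpace ℝ F]

def map (T : E →L[ℝ] F) : Dual ℝ F →L[ℝ] Dual ℝ E :=
  (ContinuousLinearMap.compL ℝ E F ℝ).flip T

lemma norm_map_le (T : E →L[ℝ] F) : ‖map T‖ ≤ ‖T‖ :=
  ContinuousLinearMap.opNorm_le_bound _ (norm_nonneg T) fun μ =>
    (ContinuousLinearMap.opNorm_comp_le (μ : F →L[ℝ] ℝ) T).trans_eq (mul_comm _ _)

lemma norm_map_apply_eq {T : E →L[ℝ] F} (hT : ‖T‖ ≤ 1)
    (hlift : ∀ y, ∃ x, T x = y ∧ ‖x‖ ≤ ‖y‖) (μ : Dual ℝ F) : ‖map T μ‖ = ‖μ‖ := by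
  refine le_antisymm (((map T).le_of_opNorm_le ((norm_map_le T).trans hT) μ).trans_eq
    (one_mul _)) ?_
  refine ContinuousLinearMap.opNorm_le_bound _ (norm_nonneg _) fun y => ?_
  obtain ⟨x, rfl, hx⟩ := hlift y
  calc ‖μ (T x)‖ = ‖map T μ x‖ := rfl
    _ ≤ ‖map T μ‖ * ‖x‖ := ContinuousLinearMap.le_opNorm _ _
    _ ≤ ‖map T μ‖ * ‖T x‖ := by gcongr

end NormedSpace.Dual

section Functoriality

variable {X Y : Type*} [MetricSpace X] [MetricSpace Y] {x₀ : X} {y₀ : Y}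

lemma LipZero.norm_le_of_lipschitzWith {f : LipZero X x₀} {K : ℝ≥0}
    (hf : LipschitzWith K (f : X → ℝ)) : ‖f‖ ≤ K :=
  NNReal.coe_le_coe.mpr (holderWith_one.mpr hf).nnholderNorm_le

variable {φ : X → Y} {K : ℝ≥0}

def LipZero.precomp (hφ : LipschitzWith K φ) (hb : φ x₀ = y₀) :
    LipZero Y y₀ →ₗ[ℝ] LipZero X x₀ where
  toFun f := ⟨(f : Y → ℝ) ∘ φ,
    (holderWith_one.mpr ((LipZero.lipschitzWith f).comp hφ)).memHolder,
    by rw [Function.comp_apply, hb, LipZero.base_eq_zero f]⟩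
  map_add' _ _ := rfl
  map_smul' _ _ := rfl

lemma LipZero.norm_precomp_le (hφ : LipschitzWith K φ) (hb : φ x₀ = y₀) (f : LipZero Y y₀) :
    ‖precomp hφ hb f‖ ≤ K * ‖f‖ := by
  rw [mul_comm]
  exact norm_le_of_lipschitzWith (f := precomp hφ hb f) ((LipZero.lipschitzWith f).comp hφ)

variable (hφ : LipschitzWith K φ) (hb : φ x₀ = y₀)

def LipZero.dualMap :
    NormedSpace.Dual ℝ (LipZero X x₀) →L[ℝ] NormedSpace.Dual ℝ (LipZero Y y₀) :=
  NormedSpace.Dual.map ((precomp hφ hb).mkContinuous K (norm_precomp_le hφ hb))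

lemma LipZero.norm_dualMap_le : ‖dualMap hφ hb‖ ≤ K :=
  (NormedSpace.Dual.norm_map_le _).trans (LinearMap.mkContinuous_norm_le _ K.2 _)

end Functoriality

section FreeSpace

open Submodule

variable {X Y : Type*} [MetricSpace X] [MetricSpace Y] {x₀ : X} {y₀ : Y}

lemma dense_span_range_freeDeltaF :
    Dense (span ℝ (Set.range (freeDeltaF X x₀)) : Set (FreeSpace X x₀)) := by
  refine (Topology.IsEmbedding.subtypeVal (p := (· ∈ FreeSpace X x₀))).isInducing.dense_iff.mpr
    fun v => ?_
  have h : ((↑) : FreeSpace X x₀ → NormedSpace.Dual ℝ (LipZero X x₀)) ''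
      span ℝ (Set.range (freeDeltaF X x₀)) = span ℝ (Set.range (freeDelta X x₀)) := by
    rw [← coe_subtype, ← map_coe, map_span, ← Set.range_comp]
    rfl
  rw [h, ← topologicalClosure_coe]
  exact v.2

lemma FreeSpace.eq_top_of_isClosed {S : Submodule ℝ (FreeSpace X x₀)}
    (hS : IsClosed (S : Set (FreeSpace X x₀))) (h : ∀ x, freeDeltaF X x₀ x ∈ S) : S = ⊤ := by
  refine eq_top_iff.mpr ?_
  rw [← dense_iff_topologicalClosure_eq_top.mp dense_span_range_freeDeltaF]
  exact topologicalClosure_minimal _ (span_le.mpr (Set.range_subset_iff.mpr h)) hS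

variable {φ : X → Y} {K : ℝ≥0} (hφ : LipschitzWith K φ) (hb : φ x₀ = y₀)

lemma LipZero.dualMap_mem_freeSpace {μ : NormedSpace.Dual ℝ (LipZero X x₀)}
    (hμ : μ ∈ FreeSpace X x₀) : dualMap hφ hb μ ∈ FreeSpace Y y₀ := by
  have h : FreeSpace X x₀ ≤ (FreeSpace Y y₀).comap (dualMap hφ hb : _ →ₗ[ℝ] _) := by
    refine topologicalClosure_minimal _ (span_le.mpr ?_)
      ((isClosed_topologicalClosure _).preimage (dualMap hφ hb).continuous)
    rintro _ ⟨x, rfl⟩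
    exact (freeDeltaF Y y₀ (φ x)).2
  exact h hμ

def freeMap : FreeSpace X x₀ →L[ℝ] FreeSpace Y y₀ :=
  ((LipZero.dualMap hφ hb).comp (FreeSpace X x₀).subtypeL).codRestrict _
    fun μ => LipZero.dualMap_mem_freeSpace hφ hb μ.2

lemma freeMap_freeDeltaF (x : X) : freeMap hφ hb (freeDeltaF X x₀ x) = freeDeltaF Y y₀ (φ x) :=
  rfl

lemma norm_freeMap_le : ‖freeMap hφ hb‖ ≤ K :=
  ContinuousLinearMap.opNorm_le_bound _ K.2 fun μ =>
    ((LipZero.dualMap hφ hb).le_of_opNorm_le (LipZero.norm_dualMap_le hφ hb) μ)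

lemma range_freeMap (hfin : (Set.range φ).Finite) :
    LinearMap.range (freeMap hφ hb : FreeSpace X x₀ →ₗ[ℝ] FreeSpace Y y₀) =
      span ℝ (freeDeltaF Y y₀ '' Set.range φ) := by
  set S := span ℝ (freeDeltaF Y y₀ '' Set.range φ)
  have : FiniteDimensional ℝ S := FiniteDimensional.span_of_finite ℝ (hfin.image _)
  refine le_antisymm ?_ (span_le.mpr ?_)
  · rintro _ ⟨μ, rfl⟩
    have h : S.comap (freeMap hφ hb : FreeSpace X x₀ →ₗ[ℝ] _) = ⊤ :=
      FreeSpace.eq_top_of_isClosed ((closed_of_finiteDimensional S).preimage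
        (freeMap hφ hb).continuous)
        fun x => subset_span ⟨φ x, ⟨x, rfl⟩, (freeMap_freeDeltaF hφ hb x).symm⟩
    exact h.ge mem_top
  · rintro _ ⟨_, ⟨x, rfl⟩, rfl⟩
    exact ⟨freeDeltaF X x₀ x, freeMap_freeDeltaF hφ hb x⟩

lemma freeMap_freeMap_of_idempotent {r : X → X} (hr : LipschitzWith K r) (hr₀ : r x₀ = x₀)
    (hidem : ∀ x, r (r x) = r x) (v : FreeSpace X x₀) :
    freeMap hr hr₀ (freeMap hr hr₀ v) = freeMap hr hr₀ v := by
  have h : (freeMap hr hr₀).comp (freeMap hr hr₀) = freeMap hr hr₀ :=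
    ContinuousLinearMap.ext_on dense_span_range_freeDeltaF fun _ ⟨x, hx⟩ =>
      hx ▸ congrArg (freeDeltaF X x₀) (hidem x)
  exact DFunLike.congr_fun h v

end FreeSpace

section Subspace

variable {X : Type*} [MetricSpace X] {x₀ : X} {s : Set X}

lemma LipZero.exists_extension (hx₀ : x₀ ∈ s) (g : LipZero s ⟨x₀, hx₀⟩) :
    ∃ f : LipZero X x₀, precomp (LipschitzWith.subtype_val s) rfl f = g ∧ ‖f‖ ≤ ‖g‖ := by
  set g' : X → ℝ := Function.extend Subtype.val (g : s → ℝ) 0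
  have hg' : s.domRestrict g' = g := funext fun x => Subtype.val_injective.extend_apply _ _ x
  have hlip : LipschitzOnWith (nnHolderNorm 1 (g : s → ℝ)) g' s := by
    rw [lipschitzOnWith_iff_restrict, hg']
    exact LipZero.lipschitzWith g
  obtain ⟨f, hf, hfg⟩ := hlip.extend_real
  have hf₀ : f x₀ = 0 :=
    (hfg hx₀).symm.trans ((congrFun hg' ⟨x₀, hx₀⟩).trans (LipZero.base_eq_zero g))
  refine ⟨⟨f, (holderWith_one.mpr hf).memHolder, hf₀⟩, Subtype.ext (funext fun x => ?_),
    norm_le_of_lipschitzWith hf⟩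
  exact (hfg x.2).symm.trans (congrFun hg' x)

variable (s) in
def FreeSpace.inclusionₗᵢ (hx₀ : x₀ ∈ s) :
    FreeSpace s ⟨x₀, hx₀⟩ →ₗᵢ[ℝ] FreeSpace X x₀ where
  toLinearMap :=
    (freeMap (x₀ := (⟨x₀, hx₀⟩ : s)) (LipschitzWith.subtype_val s) rfl).toLinearMap
  norm_map' v :=
    NormedSpace.Dual.norm_map_apply_eq (T := (LipZero.precomp (LipschitzWith.subtype_val s)
      rfl).mkContinuous 1 (LipZero.norm_precomp_le (LipschitzWith.subtype_val s) rfl))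
      (LinearMap.mkContinuous_norm_le _ zero_le_one _ |>.trans_eq NNReal.coe_one)
      (LipZero.exists_extension hx₀) v

end Subspace

theorem freeSpace_finite_subset_one_complemented_general
    (M : Type*) [MetricSpace M]
    (hU : ∀ x y z : M, dist x z ≤ max (dist x y) (dist y z)) (base : M)
    (N : Set M) (hNfin : N.Finite) (hbase : base ∈ N) :
    ∃ P : FreeSpace M base →L[ℝ] FreeSpace M base,
      ‖P‖ ≤ 1 ∧
      (∀ v : FreeSpace M base, P (P v) = P v) ∧
      LinearMap.range (P : FreeSpace M base →ₗ[ℝ] FreeSpace M base) =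
        Submodule.span ℝ (freeDeltaF M base '' N) ∧
      Nonempty
        ((Submodule.span ℝ (freeDeltaF M base '' N)) ≃ₗᵢ[ℝ]
          FreeSpace N (⟨base, hbase⟩ : N)) := by
  have : IsUltrametricDist M := ⟨hU⟩
  set r := nearestPointRetraction N (hNfin.nearestPoints_nonempty ⟨base, hbase⟩)
  have hr : LipschitzWith 1 r := lipschitzWith_one_nearestPointRetraction
  have hr₀ : r base = base := nearestPointRetraction_of_mem hbase
  have hrange : Set.range r = N := range_nearestPointRetraction
  have hincl : LinearMap.range (FreeSpace.inclusionₗᵢ N hbase).toLinearMap =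
      Submodule.span ℝ (freeDeltaF M base '' N) := by
    have h := range_freeMap (LipschitzWith.subtype_val N)
      (rfl : ((⟨base, hbase⟩ : N) : M) = base) (by rwa [Subtype.range_coe])
    rwa [Subtype.range_coe] at h
  refine ⟨freeMap hr hr₀, (norm_freeMap_le hr hr₀).trans_eq NNReal.coe_one,
    freeMap_freeMap_of_idempotent hr hr₀ fun x =>
      nearestPointRetraction_of_mem (nearestPointRetraction_mem x), ?_,
    ⟨(LinearIsometryEquiv.ofEq _ _ hincl.symm).trans
      (FreeSpace.inclusionₗᵢ N hbase).equivRange.symm⟩⟩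
  rw [range_freeMap hr hr₀ (hrange ▸ hNfin), hrange]

/-- **(Remark: finite subsets are 1-complemented).** Let `M` be a separable ultrametric
space with distinguished point `base` and `N ⊆ M` a finite subset containing `base`. Then
there is a linear projection `P` on `F(M)` with `‖P‖ ≤ 1` whose range is the linear span
of `{δ_M(x) : x ∈ N}`; in particular `F(N)` is `1`-complemented in `F(M)`. -/
theorem freeSpace_finite_subset_one_complemented
    (M : Type*) [MetricSpace M] [TopologicalSpace.SeparableSpace M]
    (hU : ∀ x y z : M, dist x z ≤ max (dist x y) (dist y z)) (base : M)
    (N : Set M) (hNfin : N.Finite) (hbase : base ∈ N) :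
    ∃ P : FreeSpace M base →L[ℝ] FreeSpace M base,
      ‖P‖ ≤ 1 ∧
      (∀ v : FreeSpace M base, P (P v) = P v) ∧
      LinearMap.range (P : FreeSpace M base →ₗ[ℝ] FreeSpace M base) =
        Submodule.span ℝ (freeDeltaF M base '' N) ∧
      Nonempty
        ((Submodule.span ℝ (freeDeltaF M base '' N)) ≃ₗᵢ[ℝ]
          FreeSpace N (⟨base, hbase⟩ : N)) :=
  freeSpace_finite_subset_one_complemented_general M hU base N hNfin hbase

end
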